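/- The fundamental representation π₁ is irreducible: every ℚ(q)-linear subspace V ⊆ F satisfying π₁(t_{ij})(V) ⊆ V for all 1 ≤ i,j ≤ 7 is either {0} or all of F. -/
import Mathlib


open TensorProduct

noncomputable section

abbrev Fq : Type := RatFunc ℚ

def q : Fq := RatFunc.X

abbrev F : Type := ℕ →₀ Fq

def ket (m : ℕ) : F := Finsupp.single m 1

/-- Linear operator on the Fock space from its action on the basis. -/
def opOf (v : ℕ → F) : F →ₗ[Fq] F := Finsupp.lift F Fq ℕ v

/-- q²-oscillator K -/
def K2 : F →ₗ[Fq] F := opOf fun m => q ^ (2 * m) • ket m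
/-- q²-oscillator A⁺ -/
def Ap : F →ₗ[Fq] F := opOf fun m => ket (m + 1)
/-- q²-oscillator A⁻ -/
def Am : F →ₗ[Fq] F := opOf fun m => (1 - q ^ (4 * m)) • ket (m - 1)
/-- q-oscillator k -/
def kk : F →ₗ[Fq] F := opOf fun m => q ^ m • ket m
/-- q-oscillator a⁺ -/
def ap : F →ₗ[Fq] F := opOf fun m => ket (m + 1)
/-- q-oscillator a⁻ -/
def am : F →ₗ[Fq] F := opOf fun m => (1 - q ^ (2 * m)) • ket (m - 1)

def pi1 (α β μ ν κ σ : Fq) : Matrix (Fin 7) (Fin 7) (F →ₗ[Fq] F) :=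
  !![μ • Am, α • K2, 0, 0, 0, 0, 0;
     β • K2, ν • Ap, 0, 0, 0, 0, 0;
     0, 0, κ • LinearMap.id, 0, 0, 0, 0;
     0, 0, 0, σ • LinearMap.id, 0, 0, 0;
     0, 0, 0, 0, κ⁻¹ • LinearMap.id, 0, 0;
     0, 0, 0, 0, 0, ν⁻¹ • Am, (q ^ 2 * β⁻¹) • K2;
     0, 0, 0, 0, 0, (q ^ 2 * α⁻¹) • K2, μ⁻¹ • Ap]

def pi2 (α β μ ν κ σ : Fq) : Matrix (Fin 7) (Fin 7) (F →ₗ[Fq] F) :=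
  !![κ • LinearMap.id, 0, 0, 0, 0, 0, 0;
     0, μ • Am, α • K2, 0, 0, 0, 0;
     0, β • K2, ν • Ap, 0, 0, 0, 0;
     0, 0, 0, σ • LinearMap.id, 0, 0, 0;
     0, 0, 0, 0, ν⁻¹ • Am, (q ^ 2 * β⁻¹) • K2, 0;
     0, 0, 0, 0, (q ^ 2 * α⁻¹) • K2, μ⁻¹ • Ap, 0;
     0, 0, 0, 0, 0, 0, κ⁻¹ • LinearMap.id]

def pi3 (α μ κa κb : Fq) : Matrix (Fin 7) (Fin 7) (F →ₗ[Fq] F) :=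
  !![κa • LinearMap.id, 0, 0, 0, 0, 0, 0;
     0, κb • LinearMap.id, 0, 0, 0, 0, 0;
     0, 0, μ • (am ∘ₗ am), α • (kk ∘ₗ am), (-((1 + q ^ 2) * μ)⁻¹ * α ^ 2) • (kk ∘ₗ kk), 0, 0;
     0, 0, (-(1 + q ^ 2) * α⁻¹ * μ) • (am ∘ₗ kk), am ∘ₗ ap - kk ∘ₗ kk, (-(q * μ)⁻¹ * α) • (kk ∘ₗ ap), 0, 0;
     0, 0, (-(1 + q ^ 2) * q ^ 2 * α⁻¹ ^ 2 * μ) • (kk ∘ₗ kk), ((1 + q ^ 2) * α⁻¹) • (kk ∘ₗ ap), μ⁻¹ • (ap ∘ₗ ap), 0, 0;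
     0, 0, 0, 0, 0, κb⁻¹ • LinearMap.id, 0;
     0, 0, 0, 0, 0, 0, κa⁻¹ • LinearMap.id]

def rhoB : Fin 7 → ℤ := ![5, 3, 1, 0, -1, -3, -5]

def CB : Matrix (Fin 7) (Fin 7) Fq := fun i j => if (i : ℕ) + (j : ℕ) = 6 then q ^ rhoB j else 0

lemma q_pow_inj : Function.Injective (fun k : ℕ => q ^ k) := by
  intro a b h
  simp only [q] at h
  have h2 : (algebraMap (Polynomial ℚ) (RatFunc ℚ)) (Polynomial.X ^ a)
      = algebraMap (Polynomial ℚ) (RatFunc ℚ) (Polynomial.X ^ b) := by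
    simpa [map_pow, RatFunc.algebraMap_X] using h
  have h3 := IsFractionRing.injective (Polynomial ℚ) (RatFunc ℚ) h2
  simpa using congrArg Polynomial.natDegree h3

lemma opOf_ket (g : ℕ → F) (m : ℕ) : opOf g (ket m) = g m := by
  simp [opOf, ket, Finsupp.lift_apply, Finsupp.sum_single_index]

lemma Ap_ket (m : ℕ) : Ap (ket m) = ket (m + 1) := opOf_ket _ m
lemma Am_ket (m : ℕ) : Am (ket m) = (1 - q ^ (4 * m)) • ket (m - 1) := opOf_ket _ m

lemma K2_apply (v : F) (n : ℕ) : K2 v n = q ^ (2 * n) * v n := by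
  classical
  rw [K2, opOf, Finsupp.lift_apply, Finsupp.sum_apply]
  rw [Finsupp.sum]
  simp only [Finsupp.smul_apply, Finsupp.single_apply, ket, smul_eq_mul]
  rw [Finset.sum_eq_single n]
  · by_cases h : n ∈ v.support
    · simp [mul_comm]
    · simp [Finsupp.notMem_support_iff.mp h]
  · intro m _ hm
    simp [hm]
  · intro h
    simp [Finsupp.notMem_support_iff.mp h]

lemma exists_ket_mem (V : Submodule Fq F) (hK2 : ∀ v ∈ V, K2 v ∈ V) :
    ∀ k : ℕ, ∀ v ∈ V, v ≠ 0 → v.support.card = k → ∃ n, ket n ∈ V := by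
  intro k
  induction k using Nat.strong_induction_on with
  | _ k ih =>
    intro v hv hv0 hcard
    obtain ⟨m, hm⟩ := Finsupp.support_nonempty_iff.mpr hv0
    by_cases hsingle : v.support = {m}
    · refine ⟨m, ?_⟩
      obtain ⟨c, hvm, hc⟩ : ∃ c : Fq, c ≠ 0 ∧ v m = c :=
        ⟨v m, Finsupp.mem_support_iff.mp hm, rfl⟩
      have hveq : v = c • ket m := by
        ext n
        by_cases hn : n = m
        · subst hn; simp [ket, Finsupp.single_apply, hc]
        · have : n ∉ v.support := by rw [hsingle]; simpa using hn
          simp [Finsupp.notMem_support_iff.mp this, ket, Finsupp.single_apply,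
            Ne.symm hn, hn]
      have h2 : c⁻¹ • v ∈ V := V.smul_mem _ hv
      rw [hveq, smul_smul, inv_mul_cancel₀ hvm, one_smul] at h2
      exact h2
    · -- there's another element
      set w : F := K2 v - q ^ (2 * m) • v with hw
      have hwV : w ∈ V := V.sub_mem (hK2 v hv) (V.smul_mem _ hv)
      have hwn : ∀ n, w n = (q ^ (2 * n) - q ^ (2 * m)) * v n := by
        intro n
        simp [hw, K2_apply, sub_mul]
      have hsupp : w.support = v.support.erase m := by
        ext n
        simp only [Finsupp.mem_support_iff, hwn, Finset.mem_erase, mul_ne_zero_iff,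
          sub_ne_zero]
        constructor
        · rintro ⟨h1, h2⟩; exact ⟨fun e => h1 (by rw [e]), h2⟩
        · rintro ⟨h1, h2⟩
          exact ⟨fun e => h1 (by simpa using q_pow_inj e), h2⟩
      have hw0 : w ≠ 0 := by
        rw [← Finsupp.support_nonempty_iff, hsupp]
        rcases Finset.eq_singleton_or_nontrivial hm with h | h
        · exact absurd h hsingle
        · obtain ⟨m', hm', hmm⟩ := h.exists_ne m
          exact ⟨m', Finset.mem_erase.mpr ⟨hmm, hm'⟩⟩
      have hlt : w.support.card < k := by
        rw [hsupp, ← hcard]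
        exact Finset.card_erase_lt_of_mem hm
      exact ih _ hlt w hwV hw0 rfl


lemma ket_zero_mem (V : Submodule Fq F) (hAm : ∀ v ∈ V, Am v ∈ V)
    {n : ℕ} (hn : ket n ∈ V) : ket 0 ∈ V := by
  induction n with
  | zero => exact hn
  | succ n ih =>
    apply ih
    have h1 : Am (ket (n + 1)) ∈ V := hAm _ hn
    rw [Am_ket] at h1
    have hne : (1 : Fq) - q ^ (4 * (n + 1)) ≠ 0 := by
      rw [sub_ne_zero]
      intro h
      have h4 : q ^ (4 * (n + 1)) = q ^ 0 := by simpa using h.symm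
      have := q_pow_inj h4
      omega
    have h2 := V.smul_mem ((1 - q ^ (4 * (n + 1)))⁻¹) h1
    rwa [smul_smul, inv_mul_cancel₀ hne, one_smul, Nat.add_sub_cancel] at h2

lemma ket_all_mem (V : Submodule Fq F) (hAp : ∀ v ∈ V, Ap v ∈ V)
    (h0 : ket 0 ∈ V) : ∀ m, ket m ∈ V := by
  intro m
  induction m with
  | zero => exact h0
  | succ m ih => simpa [Ap_ket] using hAp _ ih


/-- the fundamental representation π₁ is irreducible. -/
theorem pi1_irreducible
    (α β μ ν κ σ : Fq) (hα : α ≠ 0) (hβ : β ≠ 0) (hμ : μ ≠ 0) (hν : ν ≠ 0)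
    (hκ : κ ≠ 0) (hσ0 : σ ≠ 0)
    (hrel : α * β = -q ^ 2 * (μ * ν)) (hσ : σ = 1 ∨ σ = -1) :
    ∀ V : Submodule Fq F,
      (∀ i j : Fin 7, ∀ v ∈ V, pi1 α β μ ν κ σ i j v ∈ V) → V = ⊥ ∨ V = ⊤ := by
  intro V hV
  by_cases hbot : V = ⊥
  · exact Or.inl hbot
  right
  have e01 : pi1 α β μ ν κ σ 0 1 = α • K2 := by simp [pi1]
  have e00 : pi1 α β μ ν κ σ 0 0 = μ • Am := by simp [pi1]
  have e11 : pi1 α β μ ν κ σ 1 1 = ν • Ap := by simp [pi1]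
  have hK2 : ∀ v ∈ V, K2 v ∈ V := by
    intro v hv
    have h := hV 0 1 v hv
    rw [e01, LinearMap.smul_apply] at h
    have := V.smul_mem α⁻¹ h
    rwa [smul_smul, inv_mul_cancel₀ hα, one_smul] at this
  have hAm : ∀ v ∈ V, Am v ∈ V := by
    intro v hv
    have h := hV 0 0 v hv
    rw [e00, LinearMap.smul_apply] at h
    have := V.smul_mem μ⁻¹ h
    rwa [smul_smul, inv_mul_cancel₀ hμ, one_smul] at this
  have hAp : ∀ v ∈ V, Ap v ∈ V := by
    intro v hv
    have h := hV 1 1 v hv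
    rw [e11, LinearMap.smul_apply] at h
    have := V.smul_mem ν⁻¹ h
    rwa [smul_smul, inv_mul_cancel₀ hν, one_smul] at this
  obtain ⟨v, hv, hv0⟩ : ∃ v ∈ V, v ≠ 0 := by
    by_contra h
    push_neg at h
    exact hbot (Submodule.eq_bot_iff V |>.mpr h)
  obtain ⟨n, hn⟩ := exists_ket_mem V hK2 v.support.card v hv hv0 rfl
  have h0 := ket_zero_mem V hAm hn
  have hall := ket_all_mem V hAp h0
  rw [eq_top_iff]
  intro f _
  have : f = f.sum fun m c => c • ket m := by
    conv_lhs => rw [← f.sum_single]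
    congr 1
    ext m c
    simp [ket, Finsupp.smul_single]
  rw [this]
  exact Submodule.sum_mem V fun m _ => V.smul_mem _ (hall m)
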